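/- arXiv:2410.07664 — 2 statements merged into one kernel-verified Lean document; each statement's English description precedes it below -/
import Mathlib

section
/- Let R : ℝ → (0,∞) be continuous and z ∈ ℝ. For a càdlàg path w : [0,∞) → ℝ define the transform Φ_z(w)_t = z + w_{h_z(t)}, where h_z(t) = inf{s ≥ 0 : ∫_0^s R(w_u)/R(z+w_u) du > t}. Then for every path w (on its interval of definition before the lifetime), Φ_{-z}(Φ_z(w)) = w, i.e. the transforms Φ_z and Φ_{-z} are mutually inverse. -/
open MeasureTheory Set Filter

/-- The additive functional `s ↦ ∫_0^s g(u) du`. -/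
noncomputable def timeInt (g : ℝ → ℝ) (s : ℝ) : ℝ := ∫ u in Set.Ioc 0 s, g u

/-- The generalized inverse time-change `h(t) = inf{s ≥ 0 : ∫_0^s g > t}`. -/
noncomputable def timeChange (g : ℝ → ℝ) (t : ℝ) : ℝ := sInf {s : ℝ | 0 ≤ s ∧ t < timeInt g s}

/-- The space-time transform `Φ_z(w)_t = z + w_{h_z(t)}` with
`h_z(t) = inf{s ≥ 0 : ∫_0^s R(w_u)/R(z+w_u) du > t}`. -/
noncomputable def Phi (R : ℝ → ℝ) (z : ℝ) (w : ℝ → ℝ) : ℝ → ℝ :=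
  fun t => z + w (timeChange (fun u => R (w u) / R (z + w u)) t)

/-!
Write `G(u) = R(w_u)/R(z+w_u)` and `A(s) = ∫_0^s G`. Since `G > 0` is locally integrable
and `A → ∞`, `A` is an increasing continuous bijection of `[0, ∞)` and `h_z` is its inverse.
The time density of `Φ_z(w)` for the transform `Φ_{-z}` is `1/G(h_z(u))`, and `h_z` pushes
Lebesgue measure on `(0, A(v)]` forward to `G(x) dx` on `(0, v]`, so
`∫_0^s 1/G(h_z(u)) du = h_z(s)`. Hence `h_{-z} = A` on `[0, ∞)` and
`Φ_{-z}(Φ_z(w))_t = w_{h_z(A(t))} = w_t`.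
-/

section TimeChange

variable {g : ℝ → ℝ}

theorem timeInt_of_nonpos {s : ℝ} (hs : s ≤ 0) : timeInt g s = 0 := by
  simp [timeInt, Ioc_eq_empty (not_lt.2 hs)]

theorem timeInt_nonneg (hg : ∀ u, 0 ≤ g u) (s : ℝ) : 0 ≤ timeInt g s :=
  setIntegral_nonneg measurableSet_Ioc fun u _ => hg u

theorem timeInt_mono (hg : ∀ u, 0 ≤ g u) (hgi : ∀ s, IntegrableOn g (Ioc 0 s)) :
    Monotone (timeInt g) := fun _ t hst =>
  setIntegral_mono_set (hgi t) (ae_of_all _ hg) (ae_of_all _ (Ioc_subset_Ioc_right hst))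

theorem timeInt_sub_timeInt (hgi : ∀ s, IntegrableOn g (Ioc 0 s)) {s t : ℝ} (hs : 0 ≤ s)
    (hst : s ≤ t) : timeInt g t - timeInt g s = ∫ u in Ioc s t, g u := by
  rw [sub_eq_iff_eq_add', timeInt, timeInt, ← setIntegral_union (Ioc_disjoint_Ioc_of_le le_rfl)
    measurableSet_Ioc ((hgi t).mono_set (Ioc_subset_Ioc_right hst))
    ((hgi t).mono_set (Ioc_subset_Ioc_left hs)), Ioc_union_Ioc_eq_Ioc hs hst]

theorem timeInt_strictMonoOn (hg : ∀ u, 0 < g u) (hgi : ∀ s, IntegrableOn g (Ioc 0 s)) :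
    StrictMonoOn (timeInt g) (Ici 0) := by
  intro s hs t _ hst
  have hpos : 0 < ∫ u in Ioc s t, g u := by
    rw [setIntegral_pos_iff_support_of_nonneg_ae (ae_of_all _ fun u => (hg u).le)
      ((hgi t).mono_set (Ioc_subset_Ioc_left hs)),
      inter_eq_self_of_subset_right fun u _ => Function.mem_support.2 (hg u).ne',
      Real.volume_Ioc]
    simpa using hst
  linarith [timeInt_sub_timeInt hgi hs hst.le]

theorem continuousOn_timeInt (hgi : ∀ s, IntegrableOn g (Ioc 0 s)) (b : ℝ) :
    ContinuousOn (timeInt g) (Icc 0 b) :=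
  intervalIntegral.continuousOn_primitive ((integrableOn_Icc_iff_integrableOn_Ioc).2 (hgi b))

theorem surjOn_timeInt (hgi : ∀ s, IntegrableOn g (Ioc 0 s))
    (hgd : Tendsto (timeInt g) atTop atTop) : SurjOn (timeInt g) (Ici 0) (Ici 0) := by
  intro t ht
  obtain ⟨b, hb⟩ := (hgd.eventually (eventually_ge_atTop t)).exists_forall_of_atTop
  obtain ⟨c, hc, hct⟩ := intermediate_value_Icc (le_max_right b 0) (continuousOn_timeInt hgi _)
    ⟨(timeInt_of_nonpos le_rfl).trans_le ht, hb _ (le_max_left b 0)⟩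
  exact ⟨c, hc.1, hct⟩

theorem timeChange_nonneg (t : ℝ) : 0 ≤ timeChange g t :=
  Real.sInf_nonneg fun _ hs => hs.1

theorem timeChange_eq_of_lt_timeInt_iff {t c : ℝ} (ht : 0 ≤ t) (hc : 0 ≤ c)
    (h : ∀ s, 0 < s → (t < timeInt g s ↔ c < s)) : timeChange g t = c := by
  have hset : {s | 0 ≤ s ∧ t < timeInt g s} = Ioi c := by
    ext s
    refine ⟨fun ⟨hs, hts⟩ => ?_,
      fun hcs => ⟨hc.trans hcs.le, (h s (hc.trans_lt hcs)).2 hcs⟩⟩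
    rcases hs.eq_or_lt with rfl | hs
    · exact absurd hts (by simpa [timeInt_of_nonpos le_rfl] using ht)
    · exact (h s hs).1 hts
  rw [timeChange, hset, csInf_Ioi]

theorem timeChange_timeInt (hg : ∀ u, 0 < g u) (hgi : ∀ s, IntegrableOn g (Ioc 0 s)) {x : ℝ}
    (hx : 0 ≤ x) : timeChange g (timeInt g x) = x :=
  timeChange_eq_of_lt_timeInt_iff (timeInt_nonneg (fun u => (hg u).le) x) hx fun _ hs =>
    (timeInt_strictMonoOn hg hgi).lt_iff_lt hx hs.le

theorem timeChange_mono (hgd : Tendsto (timeInt g) atTop atTop) : Monotone (timeChange g) :=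
  fun _ t' htt' => csInf_le_csInf ⟨0, fun _ hs => hs.1⟩
    (((hgd.eventually (eventually_gt_atTop t')).and (eventually_ge_atTop 0)).exists.imp
      fun _ hs => ⟨hs.2, hs.1⟩)
    fun _ hs => ⟨hs.1, htt'.trans_lt hs.2⟩

theorem timeChange_le_iff (hg : ∀ u, 0 < g u) (hgi : ∀ s, IntegrableOn g (Ioc 0 s))
    (hgd : Tendsto (timeInt g) atTop atTop) {u : ℝ} (hu : 0 < u) (s : ℝ) :
    timeChange g u ≤ s ↔ u ≤ timeInt g s := by
  rcases lt_or_ge s 0 with hs | hs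
  · rw [timeInt_of_nonpos hs.le]
    exact iff_of_false (not_le.2 (hs.trans_le (timeChange_nonneg u))) (not_le.2 hu)
  obtain ⟨c, hc, rfl⟩ := surjOn_timeInt hgi hgd hu.le
  rw [timeChange_timeInt hg hgi hc]
  exact ((timeInt_strictMonoOn hg hgi).le_iff_le hc hs).symm

theorem map_timeChange_restrict (hg : ∀ u, 0 < g u) (hgi : ∀ s, IntegrableOn g (Ioc 0 s))
    (hgd : Tendsto (timeInt g) atTop atTop) (v : ℝ) :
    (volume.restrict (Ioc 0 (timeInt g v))).map (timeChange g) =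
      (volume.restrict (Ioc 0 v)).withDensity fun x => ENNReal.ofReal (g x) := by
  have hmeas : Measurable (timeChange g) := (timeChange_mono hgd).measurable
  have hpre (a : ℝ) :
      timeChange g ⁻¹' Iic a ∩ Ioc 0 (timeInt g v) = Ioc 0 (timeInt g (min a v)) := by
    ext u
    simp only [mem_inter_iff, mem_preimage, mem_Iic, mem_Ioc,
      (timeInt_mono (fun u => (hg u).le) hgi).map_min, le_min_iff]
    constructor
    · rintro ⟨hua, hu, huv⟩
      exact ⟨hu, (timeChange_le_iff hg hgi hgd hu a).1 hua, huv⟩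
    · rintro ⟨hu, hua, huv⟩
      exact ⟨(timeChange_le_iff hg hgi hgd hu a).2 hua, hu, huv⟩
  refine Measure.ext_of_Iic _ _ fun a => ?_
  rw [Measure.map_apply hmeas measurableSet_Iic, Measure.restrict_apply (hmeas measurableSet_Iic),
    hpre, withDensity_apply _ measurableSet_Iic, Measure.restrict_restrict measurableSet_Iic,
    inter_comm, Ioc_inter_Iic, min_comm, Real.volume_Ioc, sub_zero, timeInt,
    ofReal_integral_eq_lintegral_ofReal (hgi _) (ae_of_all _ fun u => (hg u).le)]

theorem setIntegral_inv_comp_timeChange (hg : ∀ u, 0 < g u)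
    (hgi : ∀ s, IntegrableOn g (Ioc 0 s))
    (hgd : Tendsto (timeInt g) atTop atTop) {v : ℝ} (hv : 0 ≤ v) :
    ∫ u in Ioc 0 (timeInt g v), (g (timeChange g u))⁻¹ = v := by
  have hgm : AEMeasurable g (volume.restrict (Ioc 0 v)) := (hgi v).aestronglyMeasurable.aemeasurable
  have hmap := map_timeChange_restrict hg hgi hgd v
  have hinv : AEStronglyMeasurable (fun x => (g x)⁻¹)
      ((volume.restrict (Ioc 0 (timeInt g v))).map (timeChange g)) := by
    rw [hmap]
    exact hgm.inv.aestronglyMeasurable.mono_ac (withDensity_absolutelyContinuous _ _)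
  calc ∫ u in Ioc 0 (timeInt g v), (g (timeChange g u))⁻¹
      = ∫ x, (g x)⁻¹ ∂(volume.restrict (Ioc 0 (timeInt g v))).map (timeChange g) :=
        (integral_map (timeChange_mono hgd).measurable.aemeasurable hinv).symm
    _ = ∫ x in Ioc 0 v, (ENNReal.ofReal (g x)).toReal • (g x)⁻¹ := by
        rw [hmap]
        exact integral_withDensity_eq_integral_toReal_smul₀
          (ENNReal.measurable_ofReal.comp_aemeasurable hgm)
          (ae_of_all _ fun _ => ENNReal.ofReal_lt_top) _
    _ = ∫ _ in Ioc 0 v, (1 : ℝ) := setIntegral_congr_fun measurableSet_Ioc fun x _ => by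
        rw [ENNReal.toReal_ofReal (hg x).le, smul_eq_mul, mul_inv_cancel₀ (hg x).ne']
    _ = v := by simp [hv]

theorem timeInt_inv_comp_timeChange (hg : ∀ u, 0 < g u)
    (hgi : ∀ s, IntegrableOn g (Ioc 0 s))
    (hgd : Tendsto (timeInt g) atTop atTop) {s : ℝ} (hs : 0 ≤ s) :
    timeInt (fun u => (g (timeChange g u))⁻¹) s = timeChange g s := by
  obtain ⟨c, hc, rfl⟩ := surjOn_timeInt hgi hgd hs
  rw [timeChange_timeInt hg hgi hc]
  exact setIntegral_inv_comp_timeChange hg hgi hgd hc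

theorem timeChange_inv_comp_timeChange (hg : ∀ u, 0 < g u)
    (hgi : ∀ s, IntegrableOn g (Ioc 0 s))
    (hgd : Tendsto (timeInt g) atTop atTop) {t : ℝ} (ht : 0 ≤ t) :
    timeChange (fun u => (g (timeChange g u))⁻¹) t = timeInt g t := by
  refine timeChange_eq_of_lt_timeInt_iff ht (timeInt_nonneg (fun u => (hg u).le) t) fun s hs => ?_
  rw [timeInt_inv_comp_timeChange hg hgi hgd hs.le, ← not_le, ← not_le,
    timeChange_le_iff hg hgi hgd hs]

end TimeChange

theorem phi_neg_phi_general (R : ℝ → ℝ) (hRpos : ∀ x, 0 < R x)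
    (z : ℝ) (w : ℝ → ℝ)
    (hfin : ∀ s : ℝ, MeasureTheory.IntegrableOn
      (fun u => R (w u) / R (z + w u)) (Set.Ioc 0 s))
    (hdiv : Filter.Tendsto (timeInt (fun u => R (w u) / R (z + w u)))
      Filter.atTop Filter.atTop) :
    ∀ t : ℝ, 0 ≤ t → Phi R (-z) (Phi R z w) t = w t := by
  intro t ht
  set G : ℝ → ℝ := fun u => R (w u) / R (z + w u)
  have hG : ∀ u, 0 < G u := fun u => div_pos (hRpos _) (hRpos _)
  have hdensity : (fun u => R (Phi R z w u) / R (-z + Phi R z w u)) =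
      fun u => (G (timeChange G u))⁻¹ := by
    funext u
    simp only [Phi, neg_add_cancel_left, inv_div, G]
  rw [Phi, hdensity, timeChange_inv_comp_timeChange hG hfin hdiv ht, Phi,
    timeChange_timeInt hG hfin ht, neg_add_cancel_left]

/-- The transforms `Φ_z` and `Φ_{-z}` are mutually inverse on paths. -/
theorem phi_neg_phi (R : ℝ → ℝ) (hRpos : ∀ x, 0 < R x) (hRcont : Continuous R)
    (z : ℝ) (w : ℝ → ℝ)
    (hw : ∀ t : ℝ, 0 ≤ t → ContinuousWithinAt w (Set.Ici t) t)
    (hwl : ∀ t : ℝ, 0 < t → ∃ l : ℝ, Filter.Tendsto w (nhdsWithin t (Set.Iio t)) (nhds l))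
    (hfin : ∀ s : ℝ, MeasureTheory.IntegrableOn
      (fun u => R (w u) / R (z + w u)) (Set.Ioc 0 s))
    (hdiv : Filter.Tendsto (timeInt (fun u => R (w u) / R (z + w u)))
      Filter.atTop Filter.atTop) :
    ∀ t : ℝ, 0 ≤ t → Phi R (-z) (Phi R z w) t = w t :=
  phi_neg_phi_general R hRpos z w hfin hdiv
end

section
/- Let R : ℝ → (0,∞), z ∈ ℝ, and let w be a càdlàg path such that h_z(t) = inf{s : ∫_0^s R(w_u)/R(z+w_u) du > t} is a continuous strictly increasing bijection from [0,ζ') onto [0,ζ). For b ∈ ℝ set T_b(w) = inf{t : w_t < b}. If T_b(w) < ζ, then T_{z+b}(Φ_z(w)) < ζ' and (z+b) − Φ_z(w)_{T_{z+b}(Φ_z(w))} = b − w_{T_b(w)}; i.e. the undershoot below any level is unchanged by the time-space transform Φ_z. -/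
open MeasureTheory Set Filter

/-- The first passage time of a path below a level `b`. -/
noncomputable def passage (w : ℝ → ℝ) (b : ℝ) : ℝ := sInf {t : ℝ | 0 ≤ t ∧ w t < b}

/-! The time change `h` is an increasing bijection `[0, ζ') → [0, ζ)`, so it carries the set of
times in `[0, ζ')` at which `w ∘ h` is below `b` onto the set of times in `[0, ζ)` at which `w` is
below `b`, and it commutes with infima of such sets: surjectivity onto an interval closed at its
left end replaces continuity. Hence `h` maps the first passage time of `w ∘ h` to that of `w`,
and `Φ_z(w) = z + w ∘ h` is below `z + b` exactly when `w ∘ h` is below `b`. -/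

section ConditionallyCompleteLinearOrder

variable {α β : Type*} [ConditionallyCompleteLinearOrder α] [ConditionallyCompleteLinearOrder β]

theorem csInf_mem_Ico_of_subset {A : Set α} {a b : α} (hA : A ⊆ Ico a b) (hne : A.Nonempty) :
    sInf A ∈ Ico a b := by
  obtain ⟨x, hx⟩ := hne
  have hbdd : BddBelow A := ⟨a, fun y hy => (hA hy).1⟩
  exact ⟨le_csInf ⟨x, hx⟩ fun y hy => (hA hy).1, (csInf_le hbdd hx).trans_lt (hA hx).2⟩

theorem csInf_inter_Iio_of_csInf_lt {S : Set α} {c : α} (hne : S.Nonempty) (hbdd : BddBelow S)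
    (hlt : sInf S < c) : sInf (S ∩ Iio c) = sInf S := by
  obtain ⟨x, hxS, hxc⟩ := exists_lt_of_csInf_lt hne hlt
  have hle_x : sInf (S ∩ Iio c) ≤ x := csInf_le (hbdd.mono inter_subset_left) ⟨hxS, hxc⟩
  refine le_antisymm (le_csInf hne fun y hy => ?_)
    (csInf_le_csInf hbdd ⟨x, hxS, hxc⟩ inter_subset_left)
  rcases lt_or_ge y c with hyc | hyc
  · exact csInf_le (hbdd.mono inter_subset_left) ⟨hy, hyc⟩
  · exact hle_x.trans (hxc.le.trans hyc)

theorem StrictMonoOn.map_csInf_of_surjOn {f : α → β} {s : Set α} {t : Set β} {A : Set α}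
    (hf : StrictMonoOn f s) (hst : SurjOn f s t) (hAs : A ⊆ s) (hne : A.Nonempty)
    (hbdd : BddBelow A) (hinf : sInf A ∈ s) (hinf' : sInf (f '' A) ∈ t) :
    f (sInf A) = sInf (f '' A) := by
  have hlower : f (sInf A) ∈ lowerBounds (f '' A) := by
    rintro _ ⟨x, hx, rfl⟩
    exact hf.monotoneOn hinf (hAs hx) (csInf_le hbdd hx)
  refine le_antisymm (le_csInf (hne.image f) hlower) ?_
  obtain ⟨x, hxs, hx⟩ := hst hinf'
  have hxA : x ≤ sInf A := le_csInf hne fun y hy =>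
    (hf.le_iff_le hxs (hAs hy)).1 (hx ▸ csInf_le ⟨_, hlower⟩ (mem_image_of_mem f hy))
  exact hx ▸ hf.monotoneOn hxs hinf hxA

end ConditionallyCompleteLinearOrder

theorem passage_const_add (w : ℝ → ℝ) (z b : ℝ) :
    passage (fun t => z + w t) (z + b) = passage w b := by
  simp only [passage, add_lt_add_iff_left]

theorem passage_eq_csInf_Ico {w : ℝ → ℝ} {b ζ : ℝ} (hhit : ∃ t ∈ Ico 0 ζ, w t < b) :
    passage w b = sInf (Ico 0 ζ ∩ w ⁻¹' Iio b) := by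
  obtain ⟨t, ht, hwt⟩ := hhit
  have hne : {t : ℝ | 0 ≤ t ∧ w t < b}.Nonempty := ⟨t, ht.1, hwt⟩
  have hbdd : BddBelow {t : ℝ | 0 ≤ t ∧ w t < b} := ⟨0, fun _ hs => hs.1⟩
  have hlt : passage w b < ζ := (csInf_le hbdd ⟨ht.1, hwt⟩).trans_lt ht.2
  rw [passage, ← csInf_inter_Iio_of_csInf_lt hne hbdd hlt]
  congr 1
  ext s
  simp only [mem_inter_iff, mem_Ico, mem_preimage, mem_Iio, mem_ofPred_eq]
  tauto

theorem passage_comp_of_strictMonoOn {w h : ℝ → ℝ} {b ζ ζ' : ℝ} (hmono : StrictMonoOn h (Ico 0 ζ'))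
    (himage : h '' Ico 0 ζ' = Ico 0 ζ) (hhit : ∃ t ∈ Ico 0 ζ, w t < b) :
    passage (w ∘ h) b < ζ' ∧ h (passage (w ∘ h) b) = passage w b := by
  obtain ⟨t, ht, hwt⟩ := hhit
  obtain ⟨τ, hτ, rfl⟩ : t ∈ h '' Ico 0 ζ' := himage ▸ ht
  have hA : (Ico 0 ζ' ∩ (w ∘ h) ⁻¹' Iio b).Nonempty := ⟨τ, hτ, hwt⟩
  have hhA : h '' (Ico 0 ζ' ∩ (w ∘ h) ⁻¹' Iio b) = Ico 0 ζ ∩ w ⁻¹' Iio b := by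
    rw [preimage_comp, image_inter_preimage, himage]
  have hinf := csInf_mem_Ico_of_subset inter_subset_left hA
  have hinf' : sInf (h '' (Ico 0 ζ' ∩ (w ∘ h) ⁻¹' Iio b)) ∈ Ico 0 ζ :=
    hhA ▸ csInf_mem_Ico_of_subset inter_subset_left ⟨_, ht, hwt⟩
  rw [passage_eq_csInf_Ico ⟨τ, hτ, hwt⟩, passage_eq_csInf_Ico ⟨_, ht, hwt⟩, ← hhA]
  exact ⟨hinf.2, hmono.map_csInf_of_surjOn (himage ▸ surjOn_image h _) inter_subset_left hA
    ⟨0, fun _ hs => hs.1.1⟩ hinf hinf'⟩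

theorem phi_undershoot_general (R : ℝ → ℝ) (z : ℝ) (w : ℝ → ℝ)
    (ζ ζ' : ℝ)
    (hbij : Set.BijOn (timeChange (fun u => R (w u) / R (z + w u)))
      (Set.Ico 0 ζ') (Set.Ico 0 ζ))
    (hmono : StrictMonoOn (timeChange (fun u => R (w u) / R (z + w u)))
      (Set.Ico 0 ζ'))
    (b : ℝ) (hhit : ∃ t ∈ Set.Ico 0 ζ, w t < b) :
    passage (Phi R z w) (z + b) < ζ' ∧
      (z + b) - Phi R z w (passage (Phi R z w) (z + b)) = b - w (passage w b) := by
  set h := timeChange (fun u => R (w u) / R (z + w u))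
  have hPhi : Phi R z w = fun t => z + (w ∘ h) t := rfl
  obtain ⟨hlt, hpass⟩ := passage_comp_of_strictMonoOn hmono hbij.image_eq hhit
  rw [hPhi, passage_const_add]
  refine ⟨hlt, ?_⟩
  simp only [Function.comp_apply, hpass]
  ring

/-- The undershoot below any level is unchanged by the transform `Φ_z`:
if `T_b(w) < ζ` then `T_{z+b}(Φ_z(w)) < ζ'` and
`(z+b) − Φ_z(w)_{T_{z+b}(Φ_z(w))} = b − w_{T_b(w)}`. -/
theorem phi_undershoot (R : ℝ → ℝ) (hRpos : ∀ x, 0 < R x) (z : ℝ) (w : ℝ → ℝ)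
    (ζ ζ' : ℝ) (hζ' : 0 < ζ')
    (hw : ∀ t : ℝ, 0 ≤ t → ContinuousWithinAt w (Set.Ici t) t)
    (hbij : Set.BijOn (timeChange (fun u => R (w u) / R (z + w u)))
      (Set.Ico 0 ζ') (Set.Ico 0 ζ))
    (hmono : StrictMonoOn (timeChange (fun u => R (w u) / R (z + w u)))
      (Set.Ico 0 ζ'))
    (hcont : ContinuousOn (timeChange (fun u => R (w u) / R (z + w u)))
      (Set.Ico 0 ζ'))
    (b : ℝ) (hhit : ∃ t ∈ Set.Ico 0 ζ, w t < b) (hT : passage w b < ζ) :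
    passage (Phi R z w) (z + b) < ζ' ∧
      (z + b) - Phi R z w (passage (Phi R z w) (z + b)) = b - w (passage w b) :=
  phi_undershoot_general R z w ζ ζ' hbij hmono b hhit
end
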